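/- Let G be a Hausdorff étale groupoid and let (Σ, i, q) be a discrete twist by T ≤ R^× over G. Then: (a) the groupoid Σ is étale; (b) the map i is a homeomorphism onto an open subset of Σ; (c) the open bisections B_α and continuous local sections P_α : B_α → Σ witnessing local triviality can be chosen so that P_α(G^(0) ∩ B_α) ⊆ Σ^(0) for each α ∈ G; (d) if G is ample, the bisections B_α can be chosen compact. -/

import Mathlib

/-!
Common definitions: topological groupoids, bisections, étale/ample groupoids,
continuous `Rˣ`-valued 2-cocycles, and twisted Steinberg algebras.

A groupoid is modelled as a type `G` together with a composability predicate
`comp`, a (partial, junk-valued off composable pairs) multiplication `mul`,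
and an inversion `inv`.  The range and source maps are `r γ = γ γ⁻¹` and
`s γ = γ⁻¹ γ`, and the unit space is the set of fixed points of `r`.
-/

namespace TwistedSteinberg

structure GroupoidStruct (G : Type*) where
  comp : G → G → Prop
  mul : G → G → G
  inv : G → G

namespace GroupoidStruct

variable {G : Type*}

/-- The range map `r γ = γ γ⁻¹`. -/
def r (T : GroupoidStruct G) (γ : G) : G := T.mul γ (T.inv γ)

/-- The source map `s γ = γ⁻¹ γ`. -/
def s (T : GroupoidStruct G) (γ : G) : G := T.mul (T.inv γ) γ

/-- The unit space `G⁰`. -/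
def unitSpace (T : GroupoidStruct G) : Set G := {x | T.r x = x}

/-- The axioms making `(comp, mul, inv)` a groupoid. -/
structure IsGroupoid (T : GroupoidStruct G) : Prop where
  comp_iff : ∀ a b, T.comp a b ↔ T.s a = T.r b
  assoc : ∀ a b c, T.comp a b → T.comp b c →
    T.mul (T.mul a b) c = T.mul a (T.mul b c)
  inv_inv : ∀ a, T.inv (T.inv a) = a
  r_mul : ∀ a b, T.comp a b → T.r (T.mul a b) = T.r a
  s_mul : ∀ a b, T.comp a b → T.s (T.mul a b) = T.s b
  r_inv : ∀ a, T.r (T.inv a) = T.s a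
  s_inv : ∀ a, T.s (T.inv a) = T.r a
  r_mul_self : ∀ a, T.mul (T.r a) a = a
  mul_s_self : ∀ a, T.mul a (T.s a) = a
  r_unit : ∀ a, T.r a ∈ T.unitSpace
  s_unit : ∀ a, T.s a ∈ T.unitSpace

/-- A topological groupoid: inversion is continuous and multiplication is
continuous on the set of composable pairs. -/
structure IsTopGroupoid [TopologicalSpace G] (T : GroupoidStruct G)
    extends IsGroupoid T : Prop where
  continuous_inv : Continuous T.inv
  continuousOn_mul : ContinuousOn (fun p : G × G => T.mul p.1 p.2)
    {p : G × G | T.comp p.1 p.2}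

/-- `B` is a bisection if it is contained in an open set `U` on which both `r`
and `s` restrict to homeomorphisms onto open subsets. -/
def IsBisection [TopologicalSpace G] (T : GroupoidStruct G) (B : Set G) : Prop :=
  ∃ U : Set G, B ⊆ U ∧ IsOpen U ∧ Set.InjOn T.r U ∧ Set.InjOn T.s U ∧
    ∀ V : Set G, V ⊆ U → IsOpen V → IsOpen (T.r '' V) ∧ IsOpen (T.s '' V)

/-- A groupoid is étale if its range map is a local homeomorphism. -/
def IsEtale [TopologicalSpace G] (T : GroupoidStruct G) : Prop :=
  IsLocalHomeomorph T.r

/-- A groupoid is ample if it has a basis of compact open bisections. -/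
def IsAmple [TopologicalSpace G] (T : GroupoidStruct G) : Prop :=
  TopologicalSpace.IsTopologicalBasis
    {B : Set G | IsCompact B ∧ IsOpen B ∧ T.IsBisection B}

/-- The product `BD` of two subsets of a groupoid. -/
def setMul (T : GroupoidStruct G) (B D : Set G) : Set G :=
  {x | ∃ a ∈ B, ∃ b ∈ D, T.comp a b ∧ T.mul a b = x}

end GroupoidStruct

open GroupoidStruct

section Cocycle

variable {G R : Type*} [TopologicalSpace G] [CommRing R] [TopologicalSpace R]

/-- A continuous normalised `Rˣ`-valued 2-cocycle on the groupoid `T`. -/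
structure IsCocycle (T : GroupoidStruct G) (σ : G → G → Rˣ) : Prop where
  continuousOn : ContinuousOn (fun p : G × G => ((σ p.1 p.2 : Rˣ) : R))
    {p : G × G | T.comp p.1 p.2}
  cocycle : ∀ a b c, T.comp a b → T.comp b c →
    σ a b * σ (T.mul a b) c = σ a (T.mul b c) * σ b c
  norm_left : ∀ γ : G, σ (T.r γ) γ = 1
  norm_right : ∀ γ : G, σ γ (T.s γ) = 1

/-- The underlying `R`-module of the (twisted) Steinberg algebra: locally
constant compactly supported functions `G → R`. -/
def steinbergCarrier (G R : Type*) [TopologicalSpace G] [Zero R] : Set (G → R) :=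
  {f | IsLocallyConstant f ∧ IsCompact (Function.support f)}

/-- The twisted convolution product
`(f *σ g)(γ) = ∑_{αβ = γ} σ(α,β) f(α) g(β)`. -/
noncomputable def conv (T : GroupoidStruct G) (σ : G → G → Rˣ)
    (f g : G → R) (γ : G) : R :=
  ∑ᶠ (p : G × G) (_ : T.comp p.1 p.2 ∧ T.mul p.1 p.2 = γ),
    ((σ p.1 p.2 : Rˣ) : R) * f p.1 * g p.2

/-- A `T`-inverse involution on `R`: a ring involution restricting to
inversion on the subgroup `Tsub ≤ Rˣ`. -/
def IsTInverseInvolution (Tsub : Subgroup Rˣ) (c : R → R) : Prop :=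
  c 1 = 1 ∧ (∀ x y, c (x + y) = c x + c y) ∧ (∀ x y, c (x * y) = c x * c y) ∧
    (∀ x, c (c x) = x) ∧ ∀ z : Rˣ, z ∈ Tsub → c ((z : Rˣ) : R) = ((z⁻¹ : Rˣ) : R)

/-- The twisted involution `f*(γ) = σ(γ,γ⁻¹)⁻¹ ⬝ c (f (γ⁻¹))`. -/
noncomputable def convStar (T : GroupoidStruct G) (σ : G → G → Rˣ) (c : R → R)
    (f : G → R) (γ : G) : R :=
  (((σ γ (T.inv γ))⁻¹ : Rˣ) : R) * c (f (T.inv γ))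

end Cocycle
section Twist

/-!
Discrete twists `G⁰ × T → Σ → G` over a Hausdorff étale groupoid `G`,
where `T = Tsub` is a subgroup of the units `Rˣ` of a discrete commutative
unital ring `R`.  The inclusion is modelled as a map `i : G → Tsub → Σ`
(only its values `i x z` for `x ∈ G⁰` are relevant).
-/

variable {G S R : Type*} [TopologicalSpace G] [TopologicalSpace S]
  [CommRing R] [TopologicalSpace R]

/-- A discrete twist `(Σ, i, q)` by `Tsub ≤ Rˣ` over `G`. -/
structure IsDiscreteTwist (TG : GroupoidStruct G) (TS : GroupoidStruct S)
    (Tsub : Subgroup Rˣ) (i : G → Tsub → S) (q : S → G) : Prop where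
  topS : TS.IsTopGroupoid
  t2S : T2Space S
  locallyCompactS : LocallyCompactSpace S
  unit_eq : TS.unitSpace = (fun x => i x 1) '' TG.unitSpace
  i_continuousOn : ContinuousOn (fun p : G × Tsub => i p.1 p.2)
    (TG.unitSpace ×ˢ (Set.univ : Set Tsub))
  i_injective : ∀ x ∈ TG.unitSpace, ∀ x' ∈ TG.unitSpace, ∀ z z' : Tsub,
    i x z = i x' z' → x = x' ∧ z = z'
  i_comp : ∀ x ∈ TG.unitSpace, ∀ z w : Tsub, TS.comp (i x z) (i x w)
  i_mul : ∀ x ∈ TG.unitSpace, ∀ z w : Tsub, TS.mul (i x z) (i x w) = i x (z * w)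
  i_inv : ∀ x ∈ TG.unitSpace, ∀ z : Tsub, TS.inv (i x z) = i x z⁻¹
  q_continuous : Continuous q
  q_surjective : Function.Surjective q
  q_quotient : ∀ V : Set G, IsOpen V ↔ IsOpen (q ⁻¹' V)
  q_comp : ∀ ε δ, TS.comp ε δ → TG.comp (q ε) (q δ)
  q_mul : ∀ ε δ, TS.comp ε δ → q (TS.mul ε δ) = TG.mul (q ε) (q δ)
  q_inv : ∀ ε, q (TS.inv ε) = TG.inv (q ε)
  q_i : ∀ x ∈ TG.unitSpace, ∀ z : Tsub, q (i x z) = x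
  i_q_unit : ∀ ε ∈ TS.unitSpace, i (q ε) 1 = ε
  q_unit_mem : ∀ ε ∈ TS.unitSpace, q ε ∈ TG.unitSpace
  exact_fibre : ∀ x ∈ TG.unitSpace, ∀ ε, q ε = x ↔ ∃ z : Tsub, ε = i x z
  central_comp_left : ∀ (ε : S) (z : Tsub), TS.comp (i (TG.r (q ε)) z) ε
  central_comp_right : ∀ (ε : S) (z : Tsub), TS.comp ε (i (TG.s (q ε)) z)
  central : ∀ (ε : S) (z : Tsub),
    TS.mul (i (TG.r (q ε)) z) ε = TS.mul ε (i (TG.s (q ε)) z)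
  locally_trivial : ∀ α : G, ∃ B : Set G, α ∈ B ∧ IsOpen B ∧ TG.IsBisection B ∧
    ∃ P : G → S, ContinuousOn P B ∧ (∀ β ∈ B, q (P β) = β) ∧
      Set.BijOn (fun p : G × Tsub => TS.mul (i (TG.r p.1) p.2) (P p.1))
        (B ×ˢ (Set.univ : Set Tsub)) (q ⁻¹' B) ∧
      ContinuousOn (fun p : G × Tsub => TS.mul (i (TG.r p.1) p.2) (P p.1))
        (B ×ˢ (Set.univ : Set Tsub)) ∧
      ∀ V ⊆ B ×ˢ (Set.univ : Set Tsub), IsOpen V →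
        IsOpen ((fun p : G × Tsub => TS.mul (i (TG.r p.1) p.2) (P p.1)) '' V)

/-- The action `z ⬝ ε = i(r(ε), z) ε` of `Tsub` on the twist `Σ`. -/
def twistAct (TG : GroupoidStruct G) (TS : GroupoidStruct S)
    {Tsub : Subgroup Rˣ} (i : G → Tsub → S) (q : S → G) (z : Tsub) (ε : S) : S :=
  TS.mul (i (TG.r (q ε)) z) ε

/-- A continuous global section `P : G → Σ` of the twist. -/
def IsGlobalSection (TG : GroupoidStruct G) (TS : GroupoidStruct S)
    (q : S → G) (P : G → S) : Prop :=
  Continuous P ∧ (∀ γ, q (P γ) = γ) ∧ ∀ x ∈ TG.unitSpace, P x ∈ TS.unitSpace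

/-- The 2-cocycle `σ` is induced by the section `P`, i.e.
`P(α) P(β) P(αβ)⁻¹ = i(r(α), σ(α,β))` for composable `(α,β)`. -/
def InducesCocycle (TG : GroupoidStruct G) (TS : GroupoidStruct S)
    {Tsub : Subgroup Rˣ} (i : G → Tsub → S) (P : G → S) (σ : G → G → Tsub) : Prop :=
  ∀ α β, TG.comp α β →
    TS.mul (TS.mul (P α) (P β)) (TS.inv (P (TG.mul α β))) = i (TG.r α) (σ α β)

/-- A continuous normalised 2-cocycle with values in the subgroup `Tsub ≤ Rˣ`. -/
structure IsCocycleSub (TG : GroupoidStruct G) (Tsub : Subgroup Rˣ)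
    (σ : G → G → Tsub) : Prop where
  continuousOn : ContinuousOn (fun p : G × G => (((σ p.1 p.2 : Rˣ)) : R))
    {p : G × G | TG.comp p.1 p.2}
  cocycle : ∀ a b c, TG.comp a b → TG.comp b c →
    σ a b * σ (TG.mul a b) c = σ a (TG.mul b c) * σ b c
  norm_left : ∀ γ : G, σ (TG.r γ) γ = 1
  norm_right : ∀ γ : G, σ γ (TG.s γ) = 1

/-- `σ` and `τ` are cohomologous via the continuous function `b : G → Tsub`. -/
def CohomologousVia (TG : GroupoidStruct G) {Tsub : Subgroup Rˣ}
    (σ τ : G → G → Tsub) (b : G → Tsub) : Prop :=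
  Continuous (fun γ : G => ((b γ : Rˣ) : R)) ∧ (∀ x ∈ TG.unitSpace, b x = 1) ∧
    ∀ α β, TG.comp α β → σ α β * (τ α β)⁻¹ = b α * b β * (b (TG.mul α β))⁻¹

/-- The twisted groupoid `G ×_σ T`. -/
def prodTwist (TG : GroupoidStruct G) (Tsub : Subgroup Rˣ) (σ : G → G → Tsub) :
    GroupoidStruct (G × Tsub) where
  comp p p' := TG.comp p.1 p'.1
  mul p p' := (TG.mul p.1 p'.1, σ p.1 p'.1 * p.2 * p'.2)
  inv p := (TG.inv p.1, (σ p.1 (TG.inv p.1))⁻¹ * p.2⁻¹)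

/-- The inclusion `i_σ : G⁰ × T → G ×_σ T`. -/
def prodTwistI (Tsub : Subgroup Rˣ) : G → Tsub → G × Tsub := fun x z => (x, z)

/-- The projection `q_σ : G ×_σ T → G`. -/
def prodTwistQ (Tsub : Subgroup Rˣ) : G × Tsub → G := fun p => p.1

/-- An isomorphism of discrete twists: a homeomorphism and groupoid
isomorphism intertwining the inclusions and projections. -/
def IsTwistIso {S1 S2 : Type*} [TopologicalSpace S1] [TopologicalSpace S2]
    (TG : GroupoidStruct G) (T1 : GroupoidStruct S1) (T2 : GroupoidStruct S2)
    {Tsub : Subgroup Rˣ} (i1 : G → Tsub → S1) (q1 : S1 → G)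
    (i2 : G → Tsub → S2) (q2 : S2 → G) (ψ : S1 → S2) : Prop :=
  Function.Bijective ψ ∧ Continuous ψ ∧ (∀ V : Set S1, IsOpen V → IsOpen (ψ '' V)) ∧
    (∀ δ ε, T1.comp δ ε → T2.comp (ψ δ) (ψ ε) ∧ ψ (T1.mul δ ε) = T2.mul (ψ δ) (ψ ε)) ∧
    (∀ x ∈ TG.unitSpace, ∀ z : Tsub, ψ (i1 x z) = i2 x z) ∧
    ∀ ε, q2 (ψ ε) = q1 ε

/-- The carrier of the twisted Steinberg algebra `A_R(G; Σ)`: continuous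
`Tsub`-equivariant functions `f : Σ → R` such that `q(supp f)` has compact
closure. -/
def twistCarrier (TG : GroupoidStruct G) (TS : GroupoidStruct S)
    {Tsub : Subgroup Rˣ} (i : G → Tsub → S) (q : S → G) : Set (S → R) :=
  {f | Continuous f ∧
    (∀ (z : Tsub) (ε : S), f (TS.mul (i (TG.r (q ε)) z) ε) = ((z : Rˣ) : R) * f ε) ∧
    IsCompact (closure (q '' Function.support f))}

/-- The convolution `(f *_Σ g)(ε) = ∑_{γ ∈ G^{s(q(ε))}} f(ε P(γ)) g(P(γ)⁻¹)`. -/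
noncomputable def twistConv (TG : GroupoidStruct G) (TS : GroupoidStruct S)
    (q : S → G) (P : G → S) (f g : S → R) (ε : S) : R :=
  ∑ᶠ (γ : G) (_ : TG.r γ = TG.s (q ε)), f (TS.mul ε (P γ)) * g (TS.inv (P γ))

/-- The involution `f*(ε) = c (f (ε⁻¹))` on `A_R(G; Σ)`. -/
def twistStar (TS : GroupoidStruct S) (c : R → R) (f : S → R) (ε : S) : R :=
  c (f (TS.inv ε))

end Twist

/-!
Local triviality identifies `q⁻¹(B)` with `B × T`, and `T` is discrete, so every sheet
`β ↦ i(r β, z) P(β)` over `B` is open and `q` maps it homeomorphically onto the bisection `B`.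
Since `r_Σ = i(·, 1) ∘ r_G ∘ q`, étaleness of `Σ` reduces to `i` being open on `G⁰ × T`, and
`i(W × {z}) = z · (Σ⁰ ∩ q⁻¹ W)` reduces that to `Σ⁰` being open. Over a unit `x` we have
`P(β) = i(β, z_β)`, and `z_β` is locally constant because `s(P β) = i(β, 1)` is the point of the
sheet of index `z_β⁻¹` over `β`; rescaling `P` by `z_x⁻¹` gives a section equal to `i(·, 1)` near
`x`. This shows that `Σ⁰` is open and gives (c) near units; away from units (c) holds after
removing the clopen set `G⁰` from `B`. For (d), shrink `B` to a compact open bisection.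
-/

namespace GroupoidStruct

variable {H : Type*} {T : GroupoidStruct H}

theorem IsGroupoid.comp_inv (h : T.IsGroupoid) (a : H) : T.comp a (T.inv a) :=
  (h.comp_iff _ _).2 (h.r_inv a).symm

theorem IsGroupoid.inv_comp (h : T.IsGroupoid) (a : H) : T.comp (T.inv a) a :=
  (h.comp_iff _ _).2 (h.s_inv a)

theorem IsGroupoid.s_eq_self (h : T.IsGroupoid) {x : H} (hx : x ∈ T.unitSpace) : T.s x = x := by
  have hsr : T.s (T.r x) = T.r x := (h.s_mul _ _ (h.comp_inv x)).trans (h.s_inv x)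
  rwa [show T.r x = x from hx] at hsr

variable [TopologicalSpace H]

theorem IsTopGroupoid.continuous_r (h : T.IsTopGroupoid) : Continuous T.r :=
  h.continuousOn_mul.comp_continuous (continuous_id.prodMk h.continuous_inv)
    h.toIsGroupoid.comp_inv

theorem IsTopGroupoid.continuous_s (h : T.IsTopGroupoid) : Continuous T.s :=
  h.continuousOn_mul.comp_continuous (h.continuous_inv.prodMk continuous_id)
    h.toIsGroupoid.inv_comp

theorem IsTopGroupoid.isClosed_unitSpace [T2Space H] (h : T.IsTopGroupoid) :
    IsClosed T.unitSpace :=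
  isClosed_eq h.continuous_r continuous_id

theorem IsEtale.isOpen_unitSpace (he : T.IsEtale) (h : T.IsGroupoid) : IsOpen T.unitSpace := by
  have hrange : T.unitSpace = Set.range T.r :=
    Set.ext fun x => ⟨fun hx => ⟨x, hx⟩, by rintro ⟨a, rfl⟩; exact h.r_unit a⟩
  exact hrange ▸ he.isOpenMap.isOpen_range

theorem IsBisection.mono {B B' : Set H} (h : T.IsBisection B) (hB' : B' ⊆ B) :
    T.IsBisection B' :=
  let ⟨U, hBU, hU⟩ := h
  ⟨U, hB'.trans hBU, hU⟩

end GroupoidStruct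

section IsOpenInjOn

variable {X Y Z : Type*} [TopologicalSpace X] [TopologicalSpace Y] [TopologicalSpace Z]

def IsOpenInjOn (f : X → Y) (U : Set X) : Prop :=
  Set.InjOn f U ∧ ∀ V ⊆ U, IsOpen V → IsOpen (f '' V)

theorem IsOpenInjOn.comp {g : Y → Z} {f : X → Y} {U : Set X} {W : Set Y}
    (hg : IsOpenInjOn g W) (hf : IsOpenInjOn f U) (hfU : Set.MapsTo f U W) :
    IsOpenInjOn (g ∘ f) U :=
  ⟨hg.1.comp hf.1 hfU, fun V hV hVo => by
    rw [Set.image_comp]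
    exact hg.2 _ ((Set.image_mono hV).trans hfU.image_subset) (hf.2 V hV hVo)⟩

theorem isLocalHomeomorph_of_isOpenInjOn {f : X → Y} (hf : Continuous f)
    (h : ∀ x, ∃ U, x ∈ U ∧ IsOpen U ∧ IsOpenInjOn f U) : IsLocalHomeomorph f := by
  rw [isLocalHomeomorph_iff_isOpenEmbedding_restrict]
  intro x
  obtain ⟨U, hxU, hUo, hinj, hopen⟩ := h x
  refine ⟨U, hUo.mem_nhds hxU, .of_continuous_injective_isOpenMap
    (hf.comp continuous_subtype_val) hinj.injective fun V hV => ?_⟩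
  rw [Set.domRestrict_eq, Set.image_comp]
  exact hopen _ (Subtype.coe_image_subset U V) (hUo.isOpenMap_subtype_val V hV)

end IsOpenInjOn

def trivMap {G S R : Type*} [CommRing R] {Tsub : Subgroup Rˣ} (TG : GroupoidStruct G)
    (TS : GroupoidStruct S) (i : G → Tsub → S) (P : G → S) : G × Tsub → S :=
  fun p => TS.mul (i (TG.r p.1) p.2) (P p.1)

theorem trivMap_eq_twistAct {G S R : Type*} [CommRing R] {Tsub : Subgroup Rˣ}
    {TG : GroupoidStruct G} {TS : GroupoidStruct S} {i : G → Tsub → S} {q : S → G}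
    {P : G → S} {β : G} (hP : q (P β) = β) (z : Tsub) :
    trivMap TG TS i P (β, z) = twistAct TG TS i q z (P β) := by
  rw [trivMap, twistAct, hP]

structure IsLocalTrivialization {G S R : Type*} [TopologicalSpace G] [TopologicalSpace S]
    [CommRing R] [TopologicalSpace R] {Tsub : Subgroup Rˣ} (TG : GroupoidStruct G)
    (TS : GroupoidStruct S) (i : G → Tsub → S) (q : S → G) (B : Set G) (P : G → S) : Prop where
  continuousOn : ContinuousOn P B
  q_apply : ∀ β ∈ B, q (P β) = β
  bijOn : Set.BijOn (trivMap TG TS i P) (B ×ˢ Set.univ) (q ⁻¹' B)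
  continuousOn_trivMap : ContinuousOn (trivMap TG TS i P) (B ×ˢ Set.univ)
  isOpen_image : ∀ V ⊆ B ×ˢ Set.univ, IsOpen V → IsOpen (trivMap TG TS i P '' V)

section Trivialization

variable {G S R : Type*} [TopologicalSpace G] [TopologicalSpace S]
  [CommRing R] [TopologicalSpace R]
  {TG : GroupoidStruct G} {TS : GroupoidStruct S} {Tsub : Subgroup Rˣ}
  {i : G → Tsub → S} {q : S → G} {B : Set G} {P : G → S}

namespace IsDiscreteTwist

theorem exists_localTrivialization (hTw : IsDiscreteTwist TG TS Tsub i q) (α : G) :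
    ∃ B, α ∈ B ∧ IsOpen B ∧ TG.IsBisection B ∧ ∃ P, IsLocalTrivialization TG TS i q B P :=
  let ⟨B, hαB, hBo, hbis, P, h₁, h₂, h₃, h₄, h₅⟩ := hTw.locally_trivial α
  ⟨B, hαB, hBo, hbis, P, h₁, h₂, h₃, h₄, h₅⟩

theorem r_eq (hTw : IsDiscreteTwist TG TS Tsub i q) (ε : S) : TS.r ε = i (TG.r (q ε)) 1 := by
  have hq : q (TS.r ε) = TG.r (q ε) := by
    rw [GroupoidStruct.r, GroupoidStruct.r, hTw.q_mul _ _ (hTw.topS.comp_inv ε), hTw.q_inv]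
  calc TS.r ε = i (q (TS.r ε)) 1 := (hTw.i_q_unit _ (hTw.topS.r_unit ε)).symm
    _ = i (TG.r (q ε)) 1 := by rw [hq]

theorem s_eq (hTw : IsDiscreteTwist TG TS Tsub i q) (ε : S) : TS.s ε = i (TG.s (q ε)) 1 := by
  have hq : q (TS.s ε) = TG.s (q ε) := by
    rw [GroupoidStruct.s, GroupoidStruct.s, hTw.q_mul _ _ (hTw.topS.inv_comp ε), hTw.q_inv]
  calc TS.s ε = i (q (TS.s ε)) 1 := (hTw.i_q_unit _ (hTw.topS.s_unit ε)).symm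
    _ = i (TG.s (q ε)) 1 := by rw [hq]

theorem q_twistAct (hTw : IsDiscreteTwist TG TS Tsub i q) (hTG : TG.IsGroupoid) (z : Tsub)
    (ε : S) : q (twistAct TG TS i q z ε) = q ε := by
  rw [twistAct, hTw.q_mul _ _ (hTw.central_comp_left ε z), hTw.q_i _ (hTG.r_unit (q ε)),
    hTG.r_mul_self]

theorem twistAct_one (hTw : IsDiscreteTwist TG TS Tsub i q) (ε : S) :
    twistAct TG TS i q 1 ε = ε := by
  rw [twistAct, ← hTw.r_eq, hTw.topS.r_mul_self]

theorem twistAct_twistAct (hTw : IsDiscreteTwist TG TS Tsub i q) (hTG : TG.IsGroupoid)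
    (z w : Tsub) (ε : S) :
    twistAct TG TS i q z (twistAct TG TS i q w ε) = twistAct TG TS i q (z * w) ε := by
  have hx : TG.r (q ε) ∈ TG.unitSpace := hTG.r_unit _
  rw [twistAct, hTw.q_twistAct hTG, twistAct, twistAct,
    ← hTw.topS.assoc _ _ _ (hTw.i_comp _ hx z w) (hTw.central_comp_left ε w), hTw.i_mul _ hx]

theorem twistAct_i (hTw : IsDiscreteTwist TG TS Tsub i q) {x : G} (hx : x ∈ TG.unitSpace)
    (z w : Tsub) : twistAct TG TS i q z (i x w) = i x (z * w) := by
  rw [twistAct, hTw.q_i x hx, show TG.r x = x from hx, hTw.i_mul x hx]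

theorem continuous_twistAct (hTw : IsDiscreteTwist TG TS Tsub i q) (hTG : TG.IsTopGroupoid)
    (z : Tsub) : Continuous (twistAct TG TS i q z) := by
  have hi : Continuous fun ε => i (TG.r (q ε)) z :=
    hTw.i_continuousOn.comp_continuous
      ((hTG.continuous_r.comp hTw.q_continuous).prodMk continuous_const)
      fun ε => ⟨hTG.r_unit _, trivial⟩
  exact hTw.topS.continuousOn_mul.comp_continuous (hi.prodMk continuous_id)
    fun ε => hTw.central_comp_left ε z

theorem isOpenMap_twistAct (hTw : IsDiscreteTwist TG TS Tsub i q) (hTG : TG.IsTopGroupoid)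
    (z : Tsub) : IsOpenMap (twistAct TG TS i q z) :=
  .of_inverse (hTw.continuous_twistAct hTG z⁻¹)
    (fun ε => by rw [hTw.twistAct_twistAct hTG.toIsGroupoid, mul_inv_cancel, hTw.twistAct_one])
    (fun ε => by rw [hTw.twistAct_twistAct hTG.toIsGroupoid, inv_mul_cancel, hTw.twistAct_one])

theorem q_trivMap (hTw : IsDiscreteTwist TG TS Tsub i q) (hTG : TG.IsGroupoid) {β : G}
    (hP : q (P β) = β) (z : Tsub) : q (trivMap TG TS i P (β, z)) = β := by
  rw [trivMap_eq_twistAct hP, hTw.q_twistAct hTG, hP]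

theorem trivMap_of_eq_i (hTw : IsDiscreteTwist TG TS Tsub i q) {β : G}
    (hβ : β ∈ TG.unitSpace) {z : Tsub} (hP : P β = i β z) (w : Tsub) :
    trivMap TG TS i P (β, w) = i β (w * z) := by
  rw [trivMap, hP, show TG.r β = β from hβ, hTw.i_mul β hβ]

end IsDiscreteTwist

namespace IsLocalTrivialization

theorem mono (hTw : IsDiscreteTwist TG TS Tsub i q) (hTG : TG.IsGroupoid)
    (h : IsLocalTrivialization TG TS i q B P) {B' : Set G} (hB' : B' ⊆ B) :
    IsLocalTrivialization TG TS i q B' P where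
  continuousOn := h.continuousOn.mono hB'
  q_apply β hβ := h.q_apply β (hB' hβ)
  bijOn := by
    refine ⟨?_, h.bijOn.injOn.mono (Set.prod_mono hB' subset_rfl), fun ε hε => ?_⟩
    · rintro ⟨β, z⟩ ⟨hβ, -⟩
      simpa only [Set.mem_preimage, hTw.q_trivMap hTG (h.q_apply β (hB' hβ))] using hβ
    · obtain ⟨⟨β, z⟩, ⟨hβ, -⟩, rfl⟩ := h.bijOn.surjOn (hB' hε)
      rw [Set.mem_preimage, hTw.q_trivMap hTG (h.q_apply β hβ)] at hε
      exact ⟨(β, z), ⟨hε, trivial⟩, rfl⟩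
  continuousOn_trivMap := h.continuousOn_trivMap.mono (Set.prod_mono hB' subset_rfl)
  isOpen_image V hV := h.isOpen_image V (hV.trans (Set.prod_mono hB' subset_rfl))

theorem twistAct_section [DiscreteTopology R] (hTw : IsDiscreteTwist TG TS Tsub i q)
    (hTG : TG.IsTopGroupoid)
    (h : IsLocalTrivialization TG TS i q B P) (z : Tsub) :
    IsLocalTrivialization TG TS i q B (fun β => twistAct TG TS i q z (P β)) := by
  let e : G × Tsub ≃ₜ G × Tsub :=
    (Homeomorph.refl G).prodCongr (Equiv.mulRight z).toHomeomorphOfDiscrete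
  have he : ∀ p, e p ∈ B ×ˢ Set.univ ↔ p ∈ B ×ˢ Set.univ := fun p => Iff.rfl
  have hq : ∀ β ∈ B, q (twistAct TG TS i q z (P β)) = β := fun β hβ =>
    (hTw.q_twistAct hTG.toIsGroupoid z _).trans (h.q_apply β hβ)
  have heq : Set.EqOn (trivMap TG TS i fun β => twistAct TG TS i q z (P β))
      (trivMap TG TS i P ∘ e) (B ×ˢ Set.univ) := by
    rintro ⟨β, w⟩ ⟨hβ, -⟩
    rw [Function.comp_apply, trivMap_eq_twistAct (hq β hβ), show e (β, w) = (β, w * z) from rfl,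
      trivMap_eq_twistAct (h.q_apply β hβ), hTw.twistAct_twistAct hTG.toIsGroupoid]
  exact
    { continuousOn := (hTw.continuous_twistAct hTG z).comp_continuousOn h.continuousOn
      q_apply := hq
      bijOn := (h.bijOn.comp (e.toEquiv.bijOn he)).congr heq.symm
      continuousOn_trivMap :=
        (h.continuousOn_trivMap.comp e.continuous.continuousOn fun p => (he p).2).congr heq
      isOpen_image := fun V hV hVo => by
        rw [(heq.mono hV).image_eq, Set.image_comp]
        exact h.isOpen_image _ (Set.image_subset_iff.2 fun p hp => (he p).2 (hV hp))
          (e.isOpenMap V hVo) }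

theorem isOpen_sheet [DiscreteTopology R] (h : IsLocalTrivialization TG TS i q B P)
    {W : Set G} (hW : W ⊆ B) (hWo : IsOpen W) (z : Tsub) :
    IsOpen ((fun β => trivMap TG TS i P (β, z)) '' W) := by
  rw [← Set.image_image (trivMap TG TS i P) (fun β => (β, z)), ← Set.prod_singleton]
  exact h.isOpen_image _ (Set.prod_mono hW (Set.subset_univ _)) (hWo.prod (isOpen_discrete _))

theorem isOpenInjOn_q_sheet (hTw : IsDiscreteTwist TG TS Tsub i q) (hTG : TG.IsGroupoid)
    (h : IsLocalTrivialization TG TS i q B P) (hBo : IsOpen B) (z : Tsub) :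
    IsOpenInjOn q ((fun β => trivMap TG TS i P (β, z)) '' B) := by
  have hq : ∀ β ∈ B, q (trivMap TG TS i P (β, z)) = β := fun β hβ =>
    hTw.q_trivMap hTG (h.q_apply β hβ) z
  refine ⟨?_, fun V hV hVo => ?_⟩
  · rintro _ ⟨β, hβ, rfl⟩ _ ⟨β', hβ', rfl⟩ hββ'
    rw [hq β hβ, hq β' hβ'] at hββ'
    rw [hββ']
  · have hqV : q '' V = B ∩ (fun β => trivMap TG TS i P (β, z)) ⁻¹' V := by
      ext β
      constructor
      · rintro ⟨ε, hεV, rfl⟩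
        obtain ⟨β', hβ', rfl⟩ := hV hεV
        rw [hq β' hβ']
        exact ⟨hβ', hεV⟩
      · rintro ⟨hβ, hβV⟩
        exact ⟨_, hβV, hq β hβ⟩
    rw [hqV]
    exact (h.continuousOn_trivMap.comp (continuousOn_id.prodMk continuousOn_const)
      fun β hβ => ⟨hβ, trivial⟩).isOpen_inter_preimage hBo hVo

theorem exists_forall_eq_i [DiscreteTopology R] (hTw : IsDiscreteTwist TG TS Tsub i q)
    (hTG : TG.IsGroupoid) (hU0 : IsOpen TG.unitSpace) (h : IsLocalTrivialization TG TS i q B P)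
    (hBo : IsOpen B) {x : G} (hxB : x ∈ B) (hx : x ∈ TG.unitSpace) :
    ∃ W z, x ∈ W ∧ IsOpen W ∧ W ⊆ B ∩ TG.unitSpace ∧ ∀ β ∈ W, P β = i β z := by
  have hfib : ∀ β ∈ B ∩ TG.unitSpace, ∃ z, P β = i β z := fun β hβ =>
    (hTw.exact_fibre β hβ.2 (P β)).1 (h.q_apply β hβ.1)
  -- `s(P β) = i(β, 1)` is the point over `β` of the sheet of index `z_β⁻¹`, where
  -- `P β = i(β, z_β)`; so `z_β = z` exactly where `s ∘ P` meets the open sheet of index `z⁻¹`.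
  have hs : ∀ β ∈ B ∩ TG.unitSpace, ∀ z, P β = i β z →
      TS.s (P β) = trivMap TG TS i P (β, z⁻¹) := fun β hβ z hz => by
    rw [hTw.s_eq, h.q_apply β hβ.1, hTG.s_eq_self hβ.2, hTw.trivMap_of_eq_i hβ.2 hz,
      inv_mul_cancel]
  obtain ⟨z₀, hz₀⟩ := hfib x ⟨hxB, hx⟩
  refine ⟨B ∩ TG.unitSpace ∩
      (TS.s ∘ P) ⁻¹' ((fun β => trivMap TG TS i P (β, z₀⁻¹)) '' B), z₀,
    ⟨⟨hxB, hx⟩, ⟨x, hxB, (hs x ⟨hxB, hx⟩ z₀ hz₀).symm⟩⟩, ?_, Set.inter_subset_left, ?_⟩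
  · exact (hTw.topS.continuous_s.comp_continuousOn (h.continuousOn.mono Set.inter_subset_left)
      ).isOpen_inter_preimage (hBo.inter hU0) (h.isOpen_sheet subset_rfl hBo z₀⁻¹)
  · rintro β ⟨hβ, β', hβ', hβ's⟩
    obtain ⟨z, hz⟩ := hfib β hβ
    have hpair : (β', z₀⁻¹) = (β, z⁻¹) :=
      h.bijOn.injOn ⟨hβ', trivial⟩ ⟨hβ.1, trivial⟩ (hβ's.trans (hs β hβ z hz))
    rw [hz, inv_injective (Prod.ext_iff.1 hpair).2]

end IsLocalTrivialization

namespace IsDiscreteTwist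

theorem exists_compact_localTrivialization
    (hTw : IsDiscreteTwist TG TS Tsub i q) (hTG : TG.IsGroupoid) (hample : TG.IsAmple) (α : G) :
    ∃ B, α ∈ B ∧ IsOpen B ∧ IsCompact B ∧ TG.IsBisection B ∧
      ∃ P, IsLocalTrivialization TG TS i q B P := by
  obtain ⟨B, hαB, hBo, -, P, h⟩ := hTw.exists_localTrivialization α
  obtain ⟨K, ⟨hKc, hKo, hKbis⟩, hαK, hKB⟩ := hample.exists_subset_of_mem_open hαB hBo
  exact ⟨K, hαK, hKo, hKc, hKbis, P, h.mono hTw hTG hKB⟩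

variable [DiscreteTopology R]

theorem exists_localTrivialization_eq_i_one (hTw : IsDiscreteTwist TG TS Tsub i q)
    (hTG : TG.IsTopGroupoid) (hU0 : IsOpen TG.unitSpace) {x : G} (hx : x ∈ TG.unitSpace) :
    ∃ W, x ∈ W ∧ IsOpen W ∧ TG.IsBisection W ∧ W ⊆ TG.unitSpace ∧
      ∃ P, IsLocalTrivialization TG TS i q W P ∧ ∀ β ∈ W, P β = i β 1 := by
  obtain ⟨B, hxB, hBo, hbis, P, h⟩ := hTw.exists_localTrivialization x
  obtain ⟨W, z, hxW, hWo, hWB, hPW⟩ :=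
    h.exists_forall_eq_i hTw hTG.toIsGroupoid hU0 hBo hxB hx
  refine ⟨W, hxW, hWo, hbis.mono (hWB.trans Set.inter_subset_left),
    fun β hβ => (hWB hβ).2, fun β => twistAct TG TS i q z⁻¹ (P β),
    ((h.mono hTw hTG.toIsGroupoid (hWB.trans Set.inter_subset_left)).twistAct_section hTw hTG z⁻¹),
    fun β hβ => ?_⟩
  beta_reduce
  rw [hPW β hβ, hTw.twistAct_i (hWB hβ).2, inv_mul_cancel]

theorem isOpen_unitSpace (hTw : IsDiscreteTwist TG TS Tsub i q) (hTG : TG.IsTopGroupoid)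
    (hU0 : IsOpen TG.unitSpace) : IsOpen TS.unitSpace := by
  refine isOpen_iff_forall_mem_open.2 fun ε hε => ?_
  obtain ⟨W, hxW, hWo, -, hWu, P, h, hPW⟩ :=
    hTw.exists_localTrivialization_eq_i_one hTG hU0 (hTw.q_unit_mem ε hε)
  have hsheet : ∀ β ∈ W, trivMap TG TS i P (β, 1) = i β 1 := fun β hβ => by
    rw [trivMap_eq_twistAct (h.q_apply β hβ), hTw.twistAct_one, hPW β hβ]
  refine ⟨_, ?_, h.isOpen_sheet subset_rfl hWo 1, q ε, hxW, ?_⟩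
  · rintro _ ⟨β, hβ, rfl⟩
    beta_reduce
    rw [hsheet β hβ, hTw.unit_eq]
    exact ⟨β, hWu hβ, rfl⟩
  · exact (hsheet _ hxW).trans (hTw.i_q_unit ε hε)

theorem isOpen_image_i (hTw : IsDiscreteTwist TG TS Tsub i q) (hTG : TG.IsTopGroupoid)
    (hU0 : IsOpen TG.unitSpace) {W : Set G} (hW : W ⊆ TG.unitSpace) (hWo : IsOpen W)
    (z : Tsub) : IsOpen ((fun x => i x z) '' W) := by
  have hunit : (fun x => i x 1) '' W = TS.unitSpace ∩ q ⁻¹' W := by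
    ext ε
    constructor
    · rintro ⟨x, hx, rfl⟩
      refine ⟨hTw.unit_eq ▸ ⟨x, hW hx, rfl⟩, ?_⟩
      rwa [Set.mem_preimage, hTw.q_i x (hW hx)]
    · rintro ⟨hε, hqε⟩
      exact ⟨q ε, hqε, hTw.i_q_unit ε hε⟩
  have htranslate : (fun x => i x z) '' W = twistAct TG TS i q z '' ((fun x => i x 1) '' W) := by
    rw [Set.image_image]
    exact Set.image_congr fun x hx => by rw [hTw.twistAct_i (hW hx), mul_one]
  rw [htranslate, hunit]
  exact hTw.isOpenMap_twistAct hTG z _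
    ((hTw.isOpen_unitSpace hTG hU0).inter (hWo.preimage hTw.q_continuous))

theorem isOpenInjOn_i (hTw : IsDiscreteTwist TG TS Tsub i q) (hTG : TG.IsTopGroupoid)
    (hU0 : IsOpen TG.unitSpace) :
    IsOpenInjOn (fun p : G × Tsub => i p.1 p.2) (TG.unitSpace ×ˢ Set.univ) := by
  refine ⟨fun p hp p' hp' hpp' => Prod.ext_iff.2 (hTw.i_injective _ hp.1 _ hp'.1 _ _ hpp'),
    fun V hV hVo => ?_⟩
  have hslices : (fun p : G × Tsub => i p.1 p.2) '' V =
      ⋃ z, (fun x => i x z) '' ((fun x => (x, z)) ⁻¹' V) := by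
    ext ε
    simp only [Set.mem_image, Set.mem_iUnion, Set.mem_preimage, Prod.exists]
    exact ⟨fun ⟨x, z, hxz, hε⟩ => ⟨z, x, hxz, hε⟩, fun ⟨z, x, hxz, hε⟩ => ⟨x, z, hxz, hε⟩⟩
  rw [hslices]
  exact isOpen_iUnion fun z => hTw.isOpen_image_i hTG hU0 (fun x hx => (hV hx).1)
    (hVo.preimage (Continuous.prodMk_left z)) z

theorem isEtale (hTw : IsDiscreteTwist TG TS Tsub i q) (hTG : TG.IsTopGroupoid)
    (hetale : TG.IsEtale) : TS.IsEtale := by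
  have hU0 := hetale.isOpen_unitSpace hTG.toIsGroupoid
  have hr : TS.r = (fun x => i x 1) ∘ TG.r ∘ q := funext hTw.r_eq
  have hi : IsOpenInjOn (fun x => i x 1) TG.unitSpace :=
    ⟨fun x hx y hy hxy => (hTw.i_injective x hx y hy 1 1 hxy).1,
      fun V hV hVo => hTw.isOpen_image_i hTG hU0 hV hVo 1⟩
  refine isLocalHomeomorph_of_isOpenInjOn hTw.topS.continuous_r fun ε => ?_
  obtain ⟨B, hB, hBo, ⟨U, hBU, -, hrinj, -, hrimg⟩, P, h⟩ := hTw.exists_localTrivialization (q ε)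
  obtain ⟨⟨β, z⟩, ⟨hβ, -⟩, rfl⟩ := h.bijOn.surjOn hB
  have hrB : IsOpenInjOn TG.r B :=
    ⟨hrinj.mono hBU, fun V hV hVo => (hrimg V (hV.trans hBU) hVo).1⟩
  refine ⟨(fun β' => trivMap TG TS i P (β', z)) '' B, ⟨β, hβ, rfl⟩,
    h.isOpen_sheet subset_rfl hBo z, ?_⟩
  rw [hr]
  refine hi.comp (hrB.comp (h.isOpenInjOn_q_sheet hTw hTG.toIsGroupoid hBo z) ?_)
    fun _ _ => hTG.r_unit _
  rintro _ ⟨β', hβ', rfl⟩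
  rwa [hTw.q_trivMap hTG.toIsGroupoid (h.q_apply β' hβ')]

theorem exists_localTrivialization_mem_unitSpace [T2Space G]
    (hTw : IsDiscreteTwist TG TS Tsub i q) (hTG : TG.IsTopGroupoid) (hU0 : IsOpen TG.unitSpace)
    (α : G) : ∃ B, α ∈ B ∧ IsOpen B ∧ TG.IsBisection B ∧ ∃ P,
      IsLocalTrivialization TG TS i q B P ∧ ∀ x ∈ TG.unitSpace ∩ B, P x ∈ TS.unitSpace := by
  by_cases hα : α ∈ TG.unitSpace
  · obtain ⟨W, hαW, hWo, hbis, -, P, h, hPW⟩ :=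
      hTw.exists_localTrivialization_eq_i_one hTG hU0 hα
    refine ⟨W, hαW, hWo, hbis, P, h, fun x hx => ?_⟩
    rw [hPW x hx.2, hTw.unit_eq]
    exact ⟨x, hx.1, rfl⟩
  · obtain ⟨B, hαB, hBo, hbis, P, h⟩ := hTw.exists_localTrivialization α
    exact ⟨B \ TG.unitSpace, ⟨hαB, hα⟩, hBo.sdiff hTG.isClosed_unitSpace,
      hbis.mono Set.sdiff_subset, P, h.mono hTw hTG.toIsGroupoid Set.sdiff_subset,
      fun x hx => (hx.2.2 hx.1).elim⟩

end IsDiscreteTwist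

end Trivialization

theorem discreteTwist_properties_general
    {G S R : Type*} [TopologicalSpace G] [TopologicalSpace S]
    [T2Space G]
    [CommRing R] [TopologicalSpace R] [DiscreteTopology R]
    (TG : GroupoidStruct G) (hTG : TG.IsTopGroupoid) (hetale : TG.IsEtale)
    (TS : GroupoidStruct S) (Tsub : Subgroup Rˣ)
    (i : G → Tsub → S) (q : S → G)
    (hTw : IsDiscreteTwist TG TS Tsub i q) :
    -- (a) `Σ` is étale
    TS.IsEtale
    -- (b) `i` is a homeomorphism onto an open subset of `Σ`
    ∧ (IsOpen ((fun p : G × Tsub => i p.1 p.2) ''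
          (TG.unitSpace ×ˢ (Set.univ : Set Tsub)))
        ∧ ∀ V ⊆ TG.unitSpace ×ˢ (Set.univ : Set Tsub), IsOpen V →
            IsOpen ((fun p : G × Tsub => i p.1 p.2) '' V))
    -- (c) local trivialisations with `P_α(G⁰ ∩ B_α) ⊆ Σ⁰`
    ∧ (∀ α : G, ∃ B : Set G, α ∈ B ∧ IsOpen B ∧ TG.IsBisection B ∧
        ∃ P : G → S, ContinuousOn P B ∧ (∀ β ∈ B, q (P β) = β) ∧
          Set.BijOn (fun p : G × Tsub => TS.mul (i (TG.r p.1) p.2) (P p.1))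
            (B ×ˢ (Set.univ : Set Tsub)) (q ⁻¹' B) ∧
          ContinuousOn (fun p : G × Tsub => TS.mul (i (TG.r p.1) p.2) (P p.1))
            (B ×ˢ (Set.univ : Set Tsub)) ∧
          (∀ V ⊆ B ×ˢ (Set.univ : Set Tsub), IsOpen V →
            IsOpen ((fun p : G × Tsub => TS.mul (i (TG.r p.1) p.2) (P p.1)) '' V)) ∧
          ∀ x ∈ TG.unitSpace ∩ B, P x ∈ TS.unitSpace)
    -- (d) if `G` is ample, compact such bisections exist
    ∧ (TG.IsAmple → ∀ α : G, ∃ B : Set G,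
        α ∈ B ∧ IsOpen B ∧ IsCompact B ∧ TG.IsBisection B ∧
        ∃ P : G → S, ContinuousOn P B ∧ (∀ β ∈ B, q (P β) = β) ∧
          Set.BijOn (fun p : G × Tsub => TS.mul (i (TG.r p.1) p.2) (P p.1))
            (B ×ˢ (Set.univ : Set Tsub)) (q ⁻¹' B) ∧
          ContinuousOn (fun p : G × Tsub => TS.mul (i (TG.r p.1) p.2) (P p.1))
            (B ×ˢ (Set.univ : Set Tsub)) ∧
          ∀ V ⊆ B ×ˢ (Set.univ : Set Tsub), IsOpen V →
            IsOpen ((fun p : G × Tsub => TS.mul (i (TG.r p.1) p.2) (P p.1)) '' V)) := by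
  have hU0 := hetale.isOpen_unitSpace hTG.toIsGroupoid
  have hi := hTw.isOpenInjOn_i hTG hU0
  refine ⟨hTw.isEtale hTG hetale, ⟨hi.2 _ subset_rfl (hU0.prod isOpen_univ), hi.2⟩,
    fun α => ?_, fun hample α => ?_⟩
  · obtain ⟨B, hαB, hBo, hbis, P, h, hunit⟩ :=
      hTw.exists_localTrivialization_mem_unitSpace hTG hU0 α
    exact ⟨B, hαB, hBo, hbis, P, h.continuousOn, h.q_apply, h.bijOn, h.continuousOn_trivMap,
      h.isOpen_image, hunit⟩
  · obtain ⟨B, hαB, hBo, hBc, hbis, P, h⟩ :=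
      hTw.exists_compact_localTrivialization hTG.toIsGroupoid hample α
    exact ⟨B, hαB, hBo, hBc, hbis, P, h.continuousOn, h.q_apply, h.bijOn,
      h.continuousOn_trivMap, h.isOpen_image⟩

/-- Properties of a discrete twist `(Σ, i, q)` by
`Tsub ≤ Rˣ` over a Hausdorff étale groupoid `G`: (a) `Σ` is étale;
(b) `i` is a homeomorphism onto an open subset of `Σ`; (c) the local
trivialisations can be chosen with `P_α(G⁰ ∩ B_α) ⊆ Σ⁰`; (d) if `G` is
ample, the bisections `B_α` can be chosen compact. -/
theorem discreteTwist_properties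
    {G S R : Type*} [TopologicalSpace G] [TopologicalSpace S]
    [T2Space G] [LocallyCompactSpace G]
    [CommRing R] [TopologicalSpace R] [DiscreteTopology R]
    (TG : GroupoidStruct G) (hTG : TG.IsTopGroupoid) (hetale : TG.IsEtale)
    (TS : GroupoidStruct S) (Tsub : Subgroup Rˣ)
    (i : G → Tsub → S) (q : S → G)
    (hTw : IsDiscreteTwist TG TS Tsub i q) :
    -- (a) `Σ` is étale
    TS.IsEtale
    -- (b) `i` is a homeomorphism onto an open subset of `Σ`
    ∧ (IsOpen ((fun p : G × Tsub => i p.1 p.2) ''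
          (TG.unitSpace ×ˢ (Set.univ : Set Tsub)))
        ∧ ∀ V ⊆ TG.unitSpace ×ˢ (Set.univ : Set Tsub), IsOpen V →
            IsOpen ((fun p : G × Tsub => i p.1 p.2) '' V))
    -- (c) local trivialisations with `P_α(G⁰ ∩ B_α) ⊆ Σ⁰`
    ∧ (∀ α : G, ∃ B : Set G, α ∈ B ∧ IsOpen B ∧ TG.IsBisection B ∧
        ∃ P : G → S, ContinuousOn P B ∧ (∀ β ∈ B, q (P β) = β) ∧
          Set.BijOn (fun p : G × Tsub => TS.mul (i (TG.r p.1) p.2) (P p.1))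
            (B ×ˢ (Set.univ : Set Tsub)) (q ⁻¹' B) ∧
          ContinuousOn (fun p : G × Tsub => TS.mul (i (TG.r p.1) p.2) (P p.1))
            (B ×ˢ (Set.univ : Set Tsub)) ∧
          (∀ V ⊆ B ×ˢ (Set.univ : Set Tsub), IsOpen V →
            IsOpen ((fun p : G × Tsub => TS.mul (i (TG.r p.1) p.2) (P p.1)) '' V)) ∧
          ∀ x ∈ TG.unitSpace ∩ B, P x ∈ TS.unitSpace)
    -- (d) if `G` is ample, compact such bisections exist
    ∧ (TG.IsAmple → ∀ α : G, ∃ B : Set G,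
        α ∈ B ∧ IsOpen B ∧ IsCompact B ∧ TG.IsBisection B ∧
        ∃ P : G → S, ContinuousOn P B ∧ (∀ β ∈ B, q (P β) = β) ∧
          Set.BijOn (fun p : G × Tsub => TS.mul (i (TG.r p.1) p.2) (P p.1))
            (B ×ˢ (Set.univ : Set Tsub)) (q ⁻¹' B) ∧
          ContinuousOn (fun p : G × Tsub => TS.mul (i (TG.r p.1) p.2) (P p.1))
            (B ×ˢ (Set.univ : Set Tsub)) ∧
          ∀ V ⊆ B ×ˢ (Set.univ : Set Tsub), IsOpen V →
            IsOpen ((fun p : G × Tsub => TS.mul (i (TG.r p.1) p.2) (P p.1)) '' V)) :=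
  discreteTwist_properties_general TG hTG hetale TS Tsub i q hTw

end TwistedSteinberg
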